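/- Let n₁, n₂, n₃ be unit vectors in ℝ³ with n_i·n_j = −1/2 for all i ≠ j (trine spin axes) and η ∈ [0,1]. The three noisy spin-1/2 observables M₁, M₂, M₃ with effects E^k_± = (1/2)(I ± η σ·n_k) are (triplewise) jointly measurable if and only if η ≤ 2/3. -/

import Mathlib

open Matrix ComplexOrder

noncomputable section

abbrev Mat2 := Matrix (Fin 2) (Fin 2) ℂ

/-- Pauli matrix σ₁. -/
def σ1 : Mat2 := !![0, 1; 1, 0]
/-- Pauli matrix σ₂. -/
def σ2 : Mat2 := !![0, -Complex.I; Complex.I, 0]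
/-- Pauli matrix σ₃. -/
def σ3 : Mat2 := !![1, 0; 0, -1]

/-- σ·a for a real 3-vector a. -/
def pauli (a : Fin 3 → ℝ) : Mat2 := (a 0 : ℂ) • σ1 + (a 1 : ℂ) • σ2 + (a 2 : ℂ) • σ3

/-- Euclidean inner product on ℝ³. -/
def dot3 (a b : Fin 3 → ℝ) : ℝ := a 0 * b 0 + a 1 * b 1 + a 2 * b 2

/-- Euclidean norm on ℝ³. -/
def norm3 (a : Fin 3 → ℝ) : ℝ := Real.sqrt (dot3 a a)

/-- A qubit effect: both `E` and `I - E` positive semidefinite. -/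
def IsEffect (E : Mat2) : Prop := E.PosSemidef ∧ (1 - E).PosSemidef

/-- A qubit density matrix. -/
def IsDensity (ρ : Mat2) : Prop := ρ.PosSemidef ∧ ρ.trace = 1

/-- E₊ = (1/2)(I + η σ·n). -/
def Epos (η : ℝ) (n : Fin 3 → ℝ) : Mat2 := (1/2 : ℂ) • (1 + (η : ℂ) • pauli n)
/-- E₋ = (1/2)(I - η σ·n). -/
def Eneg (η : ℝ) (n : Fin 3 → ℝ) : Mat2 := (1/2 : ℂ) • (1 - (η : ℂ) • pauli n)

/-- A pairwise joint measurement of the noisy spin-1/2 observables along nᵢ and nⱼ. -/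
def IsJointMmt (η : ℝ) (ni nj : Fin 3 → ℝ) (Gpp Gpm Gmp Gmm : Mat2) : Prop :=
  IsEffect Gpp ∧ IsEffect Gpm ∧ IsEffect Gmp ∧ IsEffect Gmm ∧
  Gpp + Gpm = Epos η ni ∧ Gmp + Gmm = Eneg η ni ∧
  Gpp + Gmp = Epos η nj ∧ Gpm + Gmm = Eneg η nj

/-- Average anticorrelation probability R₃(ρ), given the anticorrelation effects of the
three pairwise joint measurements. -/
def R3 (ρ G12pm G12mp G13pm G13mp G23pm G23mp : Mat2) : ℝ :=
  (1/3) * ((ρ * (G12pm + G12mp)).trace.re + (ρ * (G13pm + G13mp)).trace.re +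
    (ρ * (G23pm + G23mp)).trace.re)

/-- Parametric joint-measurement family. -/
def Gpp (η : ℝ) (ni nj : Fin 3 → ℝ) (α : ℝ) (a : Fin 3 → ℝ) : Mat2 :=
  (1/2 : ℂ) • (((α/2 : ℝ) : ℂ) • (1 : Mat2) + pauli ((1/2 : ℝ) • (η • (ni + nj) - a)))
def Gpm (η : ℝ) (ni nj : Fin 3 → ℝ) (α : ℝ) (a : Fin 3 → ℝ) : Mat2 :=
  (1/2 : ℂ) • (((1 - α/2 : ℝ) : ℂ) • (1 : Mat2) + pauli ((1/2 : ℝ) • (η • (ni - nj) + a)))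
def Gmp (η : ℝ) (ni nj : Fin 3 → ℝ) (α : ℝ) (a : Fin 3 → ℝ) : Mat2 :=
  (1/2 : ℂ) • (((1 - α/2 : ℝ) : ℂ) • (1 : Mat2) + pauli ((1/2 : ℝ) • (-(η • ni) + η • nj + a)))
def Gmm (η : ℝ) (ni nj : Fin 3 → ℝ) (α : ℝ) (a : Fin 3 → ℝ) : Mat2 :=
  (1/2 : ℂ) • (((α/2 : ℝ) : ℂ) • (1 : Mat2) + pauli ((1/2 : ℝ) • (-(η • (ni + nj)) - a)))

/-- Trine directions in the ZX plane. -/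
def tn1 : Fin 3 → ℝ := ![0, 0, 1]
def tn2 : Fin 3 → ℝ := ![Real.sqrt 3 / 2, 0, -(1/2)]
def tn3 : Fin 3 → ℝ := ![-(Real.sqrt 3 / 2), 0, -(1/2)]

/-- sign of a Boolean, as ±1. -/
def sgn (b : Bool) : ℝ := if b then 1 else -1

/-- m_X = Σₖ Xₖ nₖ. -/
def mvec {N : ℕ} (n : Fin N → Fin 3 → ℝ) (X : Fin N → Bool) : Fin 3 → ℝ :=
  ∑ k, sgn (X k) • n k

/-- Joint measurability of the N noisy qubit observables. -/
def JointlyMeasurable {N : ℕ} (η : ℝ) (n : Fin N → Fin 3 → ℝ) : Prop :=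
  ∃ E : (Fin N → Bool) → Mat2,
    (∀ X, IsEffect (E X)) ∧ (∑ X, E X) = 1 ∧
    (∀ k, ∑ X ∈ Finset.univ.filter (fun X => X k = true), E X = Epos η (n k)) ∧
    (∀ k, ∑ X ∈ Finset.univ.filter (fun X => X k = false), E X = Eneg η (n k))

/-!
Write `m_X = ∑ₖ Xₖ nₖ` for a sign pattern `X`. For a joint measurement `E`, the marginal
conditions give `∑_X tr(E_X σ·m_X) = ∑ₖ tr((E^k_+ − E^k_−) σ·nₖ) = 2η ∑ₖ |nₖ|²`, while
`tr(E σ·m) ≤ |m| tr E` for every positive `E`, because `|m| I − σ·m` is positive. For trine axes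
`|m_X| = 2` unless all signs agree, in which case `m_X = 0`; hence `6η ≤ 2 tr I = 4`.

Conversely, for `η ≤ 2/3` the effects `E_X = (1/6) I + (η/8) σ·m_X` for the six non-constant
sign patterns and `E_X = 0` for the two constant ones form a joint measurement: the marginals
follow from `∑_{X : Xₖ = ±} m_X = ±4 nₖ`, and `E_X`, `I − E_X` are positive since
`η |m_X| / 8 ≤ 1/6`.
-/

def pauliLinearMap : (Fin 3 → ℝ) →ₗ[ℝ] Mat2 where
  toFun := pauli
  map_add' a b := by
    simp only [pauli, Pi.add_apply, Complex.ofReal_add, add_smul]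
    abel
  map_smul' c a := by
    simp only [pauli, Pi.smul_apply, smul_eq_mul, Complex.ofReal_mul, mul_smul, smul_add,
      RingHom.id_apply, Complex.coe_smul]

lemma pauli_smul (c : ℝ) (a : Fin 3 → ℝ) : pauli (c • a) = c • pauli a :=
  map_smul pauliLinearMap c a

lemma pauli_neg (a : Fin 3 → ℝ) : pauli (-a) = -pauli a :=
  map_neg pauliLinearMap a

lemma pauli_sum {ι : Type*} (s : Finset ι) (a : ι → Fin 3 → ℝ) :
    pauli (∑ i ∈ s, a i) = ∑ i ∈ s, pauli (a i) :=
  map_sum pauliLinearMap a s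

lemma sum_smul_one_add_pauli {ι : Type*} (s : Finset ι) (c : ι → ℝ) (a : ι → Fin 3 → ℝ) :
    ∑ i ∈ s, ((c i : ℂ) • (1 : Mat2) + pauli (a i)) = ((∑ i ∈ s, c i : ℝ) : ℂ) • 1
      + pauli (∑ i ∈ s, a i) := by
  rw [Finset.sum_add_distrib, ← Finset.sum_smul, pauli_sum, Complex.ofReal_sum]

lemma pauli_eq_matrix (a : Fin 3 → ℝ) :
    pauli a = !![(a 2 : ℂ), a 0 - a 1 * Complex.I; a 0 + a 1 * Complex.I, -(a 2 : ℂ)] := by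
  ext i j
  fin_cases i <;> fin_cases j <;> simp [pauli, σ1, σ2, σ3, sub_eq_add_neg]

lemma isHermitian_pauli (a : Fin 3 → ℝ) : (pauli a).IsHermitian := by
  ext i j
  fin_cases i <;> fin_cases j <;> simp [pauli_eq_matrix, Complex.ext_iff]

lemma trace_pauli_mul_pauli (a b : Fin 3 → ℝ) :
    (pauli a * pauli b).trace = 2 * (dot3 a b : ℂ) := by
  simp only [pauli_eq_matrix, trace_fin_two, mul_apply, Fin.sum_univ_two, dot3, of_apply,
    cons_val', cons_val_zero, cons_val_one, cons_val_fin_one, mul_neg, neg_mul, neg_neg,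
    Complex.ofReal_add, Complex.ofReal_mul]
  ring_nf
  simp only [Complex.I_sq]
  ring

lemma Epos_eq (η : ℝ) (n : Fin 3 → ℝ) :
    Epos η n = ((1 / 2 : ℝ) : ℂ) • 1 + pauli ((η / 2) • n) := by
  rw [Epos, pauli_smul]
  push_cast
  module

lemma Eneg_eq (η : ℝ) (n : Fin 3 → ℝ) :
    Eneg η n = ((1 / 2 : ℝ) : ℂ) • 1 + pauli ((-η / 2) • n) := by
  rw [Eneg, pauli_smul]
  push_cast
  module

lemma Epos_add_Eneg (η : ℝ) (n : Fin 3 → ℝ) : Epos η n + Eneg η n = 1 := by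
  simp only [Epos, Eneg]
  module

lemma Epos_sub_Eneg (η : ℝ) (n : Fin 3 → ℝ) : Epos η n - Eneg η n = (η : ℂ) • pauli n := by
  simp only [Epos, Eneg]
  module

/-- Unnormalised Bloch vector of the rank-one matrix `x xᴴ`. -/
def blochVector (x : Fin 2 → ℂ) : Fin 3 → ℝ :=
  ![2 * (star (x 0) * x 1).re, 2 * (star (x 0) * x 1).im,
    Complex.normSq (x 0) - Complex.normSq (x 1)]

lemma star_dotProduct_pauli_mulVec (a : Fin 3 → ℝ) (x : Fin 2 → ℂ) :
    star x ⬝ᵥ (pauli a *ᵥ x) = (dot3 a (blochVector x) : ℂ) := by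
  simp only [pauli_eq_matrix, dotProduct, mulVec, Fin.sum_univ_two, dot3, blochVector]
  apply Complex.ext <;> simp [Complex.normSq_apply] <;> ring

lemma dot3_blochVector_self (x : Fin 2 → ℂ) :
    dot3 (blochVector x) (blochVector x) = (Complex.normSq (x 0) + Complex.normSq (x 1)) ^ 2 := by
  simp only [dot3, blochVector, RCLike.star_def, Complex.mul_re, Complex.mul_im, Complex.conj_re,
    Complex.conj_im, Complex.normSq_apply, cons_val_zero, cons_val_one, cons_val]
  ring

lemma star_dotProduct_self_fin_two (x : Fin 2 → ℂ) :
    star x ⬝ᵥ x = ((Complex.normSq (x 0) + Complex.normSq (x 1) : ℝ) : ℂ) := by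
  simp [dotProduct, Fin.sum_univ_two, Complex.normSq_eq_conj_mul_self]

lemma sq_dot3_le (a b : Fin 3 → ℝ) : dot3 a b ^ 2 ≤ dot3 a a * dot3 b b := by
  simp only [dot3]
  nlinarith [sq_nonneg (a 0 * b 1 - a 1 * b 0), sq_nonneg (a 0 * b 2 - a 2 * b 0),
    sq_nonneg (a 1 * b 2 - a 2 * b 1)]

lemma posSemidef_smul_one_add_pauli {t : ℝ} {a : Fin 3 → ℝ} (ht : 0 ≤ t)
    (ha : dot3 a a ≤ t ^ 2) : ((t : ℂ) • (1 : Mat2) + pauli a).PosSemidef := by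
  refine .of_dotProduct_mulVec_nonneg ?_ fun x => ?_
  · exact (isHermitian_one.smul (Complex.conj_ofReal t)).add (isHermitian_pauli a)
  set s := Complex.normSq (x 0) + Complex.normSq (x 1)
  have hs : 0 ≤ s := add_nonneg (Complex.normSq_nonneg _) (Complex.normSq_nonneg _)
  have hCS : dot3 a (blochVector x) ^ 2 ≤ (t * s) ^ 2 :=
    calc _ ≤ dot3 a a * dot3 (blochVector x) (blochVector x) := sq_dot3_le _ _
      _ ≤ t ^ 2 * s ^ 2 := by rw [dot3_blochVector_self]; gcongr
      _ = (t * s) ^ 2 := by ring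
  rw [add_mulVec, smul_mulVec, one_mulVec, dotProduct_add, dotProduct_smul,
    star_dotProduct_self_fin_two, star_dotProduct_pauli_mulVec, smul_eq_mul]
  exact_mod_cast (by nlinarith [(abs_le_of_sq_le_sq' hCS (by positivity)).1] :
    (0 : ℝ) ≤ t * s + dot3 a (blochVector x))

lemma isEffect_smul_one_add_pauli {t : ℝ} {a : Fin 3 → ℝ} (ht₀ : 0 ≤ t) (ht₁ : t ≤ 1)
    (ha : dot3 a a ≤ t ^ 2) (ha' : dot3 a a ≤ (1 - t) ^ 2) :
    IsEffect ((t : ℂ) • (1 : Mat2) + pauli a) := by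
  refine ⟨posSemidef_smul_one_add_pauli ht₀ ha, ?_⟩
  have h : (1 : Mat2) - ((t : ℂ) • 1 + pauli a) = ((1 - t : ℝ) : ℂ) • 1 + pauli (-a) := by
    rw [pauli_neg]; push_cast; module
  rw [h]
  exact posSemidef_smul_one_add_pauli (sub_nonneg.mpr ht₁) (by simpa [dot3] using ha')

open scoped MatrixOrder in
lemma Matrix.PosSemidef.trace_mul_nonneg {n : Type*} [Fintype n] [DecidableEq n]
    {A B : Matrix n n ℂ} (hA : A.PosSemidef) (hB : B.PosSemidef) : 0 ≤ (A * B).trace := by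
  obtain ⟨X, rfl⟩ := CStarAlgebra.nonneg_iff_eq_star_mul_self.mp hB.nonneg
  rw [← mul_assoc, trace_mul_comm, ← mul_assoc]
  exact (hA.mul_mul_conjTranspose_same X).trace_nonneg

lemma trace_mul_pauli_le {E : Mat2} (hE : E.PosSemidef) {t : ℝ} {a : Fin 3 → ℝ} (ht : 0 ≤ t)
    (ha : dot3 a a ≤ t ^ 2) : (E * pauli a).trace ≤ t * E.trace := by
  have h := hE.trace_mul_nonneg <|
    posSemidef_smul_one_add_pauli ht (a := -a) (by simpa [dot3] using ha)
  rw [pauli_neg, mul_add, mul_neg, trace_add, trace_neg, Matrix.mul_smul, mul_one, trace_smul,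
    smul_eq_mul, ← sub_eq_add_neg] at h
  exact sub_nonneg.mp h

lemma sum_sgn_smul_eq_sub {ι M : Type*} [Fintype ι] [DecidableEq ι] [AddCommGroup M]
    [Module ℝ M] (f : (ι → Bool) → M) (k : ι) :
    ∑ X, sgn (X k) • f X = ∑ X ∈ Finset.univ.filter (fun X => X k = true), f X
      - ∑ X ∈ Finset.univ.filter (fun X => X k = false), f X := by
  rw [Finset.sum_filter, Finset.sum_filter, ← Finset.sum_sub_distrib]
  refine Finset.sum_congr rfl fun X _ => ?_
  cases X k <;> simp [sgn]

lemma sum_trace_mul_pauli_mvec {N : ℕ} {η : ℝ} {n : Fin N → Fin 3 → ℝ}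
    {E : (Fin N → Bool) → Mat2}
    (hpos : ∀ k, ∑ X ∈ Finset.univ.filter (fun X => X k = true), E X = Epos η (n k))
    (hneg : ∀ k, ∑ X ∈ Finset.univ.filter (fun X => X k = false), E X = Eneg η (n k)) :
    ∑ X, (E X * pauli (mvec n X)).trace = ((2 * η * ∑ k, dot3 (n k) (n k) : ℝ) : ℂ) := by
  calc ∑ X, (E X * pauli (mvec n X)).trace
      = ∑ k, ((∑ X, sgn (X k) • E X) * pauli (n k)).trace := by
        simp only [mvec, pauli_sum, pauli_smul, Finset.mul_sum, Finset.sum_mul, Matrix.mul_smul,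
          Matrix.smul_mul, trace_sum, trace_smul]
        exact Finset.sum_comm
    _ = ∑ k, ((η : ℂ) • (pauli (n k) * pauli (n k))).trace := by
        simp only [sum_sgn_smul_eq_sub, hpos, hneg, Epos_sub_Eneg, Matrix.smul_mul]
    _ = ((2 * η * ∑ k, dot3 (n k) (n k) : ℝ) : ℂ) := by
        simp only [trace_smul, trace_pauli_mul_pauli, Finset.mul_sum, smul_eq_mul]
        push_cast
        ring_nf

lemma JointlyMeasurable.mul_sum_dot3_self_le {N : ℕ} {η r : ℝ} {n : Fin N → Fin 3 → ℝ}
    (h : JointlyMeasurable η n) (hr : 0 ≤ r) (hm : ∀ X, dot3 (mvec n X) (mvec n X) ≤ r ^ 2) :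
    η * ∑ k, dot3 (n k) (n k) ≤ r := by
  obtain ⟨E, hE, hsum, hpos, hneg⟩ := h
  have key : ((2 * η * ∑ k, dot3 (n k) (n k) : ℝ) : ℂ) ≤ ((2 * r : ℝ) : ℂ) :=
    calc ((2 * η * ∑ k, dot3 (n k) (n k) : ℝ) : ℂ) = ∑ X, (E X * pauli (mvec n X)).trace :=
          (sum_trace_mul_pauli_mvec hpos hneg).symm
      _ ≤ ∑ X, r * (E X).trace :=
          Finset.sum_le_sum fun X _ => trace_mul_pauli_le (hE X).1 hr (hm X)
      _ = ((2 * r : ℝ) : ℂ) := by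
          rw [← Finset.mul_sum, ← trace_sum, hsum, trace_one, Fintype.card_fin]
          push_cast
          ring
  have := Complex.real_le_real.mp key
  linarith

lemma mvec_fin_three (n : Fin 3 → Fin 3 → ℝ) (X : Fin 3 → Bool) :
    mvec n X = sgn (X 0) • n 0 + sgn (X 1) • n 1 + sgn (X 2) • n 2 := by
  simp [mvec, Fin.sum_univ_three]

lemma sum_fin_three_bool {M : Type*} [AddCommMonoid M] (f : (Fin 3 → Bool) → M) :
    ∑ X, f X = ∑ a, ∑ b, ∑ c, f ![a, b, c] := by
  simp only [← Fintype.sum_prod_type']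
  exact (Fintype.sum_bijective (fun p : Bool × Bool × Bool => ![p.1, p.2.1, p.2.2]) (by decide)
    _ _ fun _ => rfl).symm

lemma sum_filter_mvec_fin_three (n : Fin 3 → Fin 3 → ℝ) (k : Fin 3) (b : Bool) :
    ∑ X ∈ Finset.univ.filter (fun X => X k = b), mvec n X = (4 * sgn b) • n k := by
  rw [Finset.sum_filter, sum_fin_three_bool]
  fin_cases k <;> cases b <;>
    simp only [Fintype.sum_bool, Fin.isValue, Fin.zero_eta, Fin.mk_one, Fin.reduceFinMk, cons_val,
      mvec_fin_three, sgn, ↓reduceIte, Bool.true_eq_false, Bool.false_eq_true] <;> module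

lemma dot3_mvec_trine {n₁ n₂ n₃ : Fin 3 → ℝ}
    (h₁ : dot3 n₁ n₁ = 1) (h₂ : dot3 n₂ n₂ = 1) (h₃ : dot3 n₃ n₃ = 1)
    (h₁₂ : dot3 n₁ n₂ = -(1/2)) (h₁₃ : dot3 n₁ n₃ = -(1/2)) (h₂₃ : dot3 n₂ n₃ = -(1/2))
    (X : Fin 3 → Bool) :
    dot3 (mvec ![n₁, n₂, n₃] X) (mvec ![n₁, n₂, n₃] X)
      = if X 0 = X 1 ∧ X 1 = X 2 then 0 else 4 := by
  have expand : ∀ s₀ s₁ s₂ : ℝ, dot3 (s₀ • n₁ + s₁ • n₂ + s₂ • n₃) (s₀ • n₁ + s₁ • n₂ + s₂ • n₃)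
      = s₀ ^ 2 + s₁ ^ 2 + s₂ ^ 2 - (s₀ * s₁ + s₀ * s₂ + s₁ * s₂) := by
    intro s₀ s₁ s₂
    simp only [dot3, Pi.add_apply, Pi.smul_apply, smul_eq_mul] at h₁ h₂ h₃ h₁₂ h₁₃ h₂₃ ⊢
    linear_combination s₀ ^ 2 * h₁ + s₁ ^ 2 * h₂ + s₂ ^ 2 * h₃ + 2 * s₀ * s₁ * h₁₂
      + 2 * s₀ * s₂ * h₁₃ + 2 * s₁ * s₂ * h₂₃
  rw [mvec_fin_three]
  simp only [Matrix.cons_val_zero, Matrix.cons_val_one, Matrix.cons_val_two, Matrix.head_cons,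
    Matrix.tail_cons, expand]
  cases X 0 <;> cases X 1 <;> cases X 2 <;> norm_num [sgn]

def trineWeight (X : Fin 3 → Bool) : ℝ := if X 0 = X 1 ∧ X 1 = X 2 then 0 else 1 / 6

def trineJointEffect (η : ℝ) (n : Fin 3 → Fin 3 → ℝ) (X : Fin 3 → Bool) : Mat2 :=
  (trineWeight X : ℂ) • 1 + pauli ((η / 8) • mvec n X)

lemma sum_filter_trineWeight (k : Fin 3) (b : Bool) :
    ∑ X ∈ Finset.univ.filter (fun X => X k = b), trineWeight X = 1 / 2 := by
  rw [Finset.sum_filter, sum_fin_three_bool]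
  fin_cases k <;> cases b <;> norm_num [trineWeight, Matrix.cons_val_two]

lemma sum_filter_trineJointEffect (η : ℝ) (n : Fin 3 → Fin 3 → ℝ) (k : Fin 3) (b : Bool) :
    ∑ X ∈ Finset.univ.filter (fun X => X k = b), trineJointEffect η n X
      = ((1 / 2 : ℝ) : ℂ) • 1 + pauli ((sgn b * η / 2) • n k) := by
  unfold trineJointEffect
  rw [sum_smul_one_add_pauli, ← Finset.smul_sum, sum_filter_trineWeight,
    sum_filter_mvec_fin_three, smul_smul]
  ring_nf

lemma isEffect_trineJointEffect {n₁ n₂ n₃ : Fin 3 → ℝ}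
    (h₁ : dot3 n₁ n₁ = 1) (h₂ : dot3 n₂ n₂ = 1) (h₃ : dot3 n₃ n₃ = 1)
    (h₁₂ : dot3 n₁ n₂ = -(1/2)) (h₁₃ : dot3 n₁ n₃ = -(1/2)) (h₂₃ : dot3 n₂ n₃ = -(1/2))
    {η : ℝ} (hη₀ : 0 ≤ η) (hη : η ≤ 2 / 3) (X : Fin 3 → Bool) :
    IsEffect (trineJointEffect η ![n₁, n₂, n₃] X) := by
  have hm := dot3_mvec_trine h₁ h₂ h₃ h₁₂ h₁₃ h₂₃ X
  have ha : dot3 ((η / 8) • mvec ![n₁, n₂, n₃] X) ((η / 8) • mvec ![n₁, n₂, n₃] X)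
      = (η / 8) ^ 2 * dot3 (mvec ![n₁, n₂, n₃] X) (mvec ![n₁, n₂, n₃] X) := by
    simp only [dot3, Pi.smul_apply, smul_eq_mul]
    ring
  unfold trineJointEffect trineWeight
  split_ifs at hm ⊢
  · exact isEffect_smul_one_add_pauli le_rfl zero_le_one (by rw [ha, hm]; norm_num)
      (by rw [ha, hm]; norm_num)
  · exact isEffect_smul_one_add_pauli (by norm_num) (by norm_num) (by rw [ha, hm]; nlinarith)
      (by rw [ha, hm]; nlinarith)

lemma jointlyMeasurable_trine {n₁ n₂ n₃ : Fin 3 → ℝ}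
    (h₁ : dot3 n₁ n₁ = 1) (h₂ : dot3 n₂ n₂ = 1) (h₃ : dot3 n₃ n₃ = 1)
    (h₁₂ : dot3 n₁ n₂ = -(1/2)) (h₁₃ : dot3 n₁ n₃ = -(1/2)) (h₂₃ : dot3 n₂ n₃ = -(1/2))
    {η : ℝ} (hη₀ : 0 ≤ η) (hη : η ≤ 2 / 3) : JointlyMeasurable η ![n₁, n₂, n₃] := by
  have hpos : ∀ k, ∑ X ∈ Finset.univ.filter (fun X => X k = true),
      trineJointEffect η ![n₁, n₂, n₃] X = Epos η (![n₁, n₂, n₃] k) := fun k => by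
    rw [sum_filter_trineJointEffect, Epos_eq, sgn, if_pos rfl, one_mul]
  have hneg : ∀ k, ∑ X ∈ Finset.univ.filter (fun X => X k = false),
      trineJointEffect η ![n₁, n₂, n₃] X = Eneg η (![n₁, n₂, n₃] k) := fun k => by
    rw [sum_filter_trineJointEffect, Eneg_eq, sgn, if_neg Bool.false_ne_true, neg_one_mul]
  refine ⟨_, isEffect_trineJointEffect h₁ h₂ h₃ h₁₂ h₁₃ h₂₃ hη₀ hη, ?_, hpos, hneg⟩
  rw [← Finset.sum_filter_add_sum_filter_not _ (fun X => X 0 = true)]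
  simp only [Bool.not_eq_true, hpos, hneg, Epos_add_Eneg]

/-- For trine spin axes (pairwise inner products -1/2), the noisy spin-1/2 observables
are triplewise jointly measurable iff η ≤ 2/3. -/
theorem trine_jm_iff (n₁ n₂ n₃ : Fin 3 → ℝ)
    (h1 : norm3 n₁ = 1) (h2 : norm3 n₂ = 1) (h3 : norm3 n₃ = 1)
    (h12 : dot3 n₁ n₂ = -(1/2)) (h13 : dot3 n₁ n₃ = -(1/2)) (h23 : dot3 n₂ n₃ = -(1/2))
    (η : ℝ) (hη : η ∈ Set.Icc (0 : ℝ) 1) :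
    JointlyMeasurable η ![n₁, n₂, n₃] ↔ η ≤ 2/3 := by
  rw [norm3, Real.sqrt_eq_one] at h1 h2 h3
  refine ⟨fun h => ?_, jointlyMeasurable_trine h1 h2 h3 h12 h13 h23 hη.1⟩
  have hm : ∀ X, dot3 (mvec ![n₁, n₂, n₃] X) (mvec ![n₁, n₂, n₃] X) ≤ 2 ^ 2 := fun X => by
    rw [dot3_mvec_trine h1 h2 h3 h12 h13 h23]
    split_ifs <;> norm_num
  have := h.mul_sum_dot3_self_le zero_le_two hm
  simp only [Fin.sum_univ_three, Matrix.cons_val_zero, Matrix.cons_val_one, Matrix.cons_val_two,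
    Matrix.head_cons, Matrix.tail_cons, h1, h2, h3] at this
  linarith

end
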